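/- Let w ∈ G be a permutation matrix with w ≠ w_{(n)}, where w_{(n)} is the antidiagonal permutation matrix (w_{(n)})_{ij} = δ_{j, n+1−i}. Then e_{(n)} · w · e_U = 0 in ℂ[G], where e_U = (1/|U|) Σ_{u∈U} u. -/

import Mathlib

open Matrix MonoidAlgebra

/-- `g` is upper triangular with all diagonal entries `1` (unipotent upper triangular). -/
def IsUU {F : Type} [Field F] {n : ℕ} (g : Matrix (Fin n) (Fin n) F) : Prop :=
  (∀ i j : Fin n, j < i → g i j = 0) ∧ (∀ i : Fin n, g i i = 1)

instance {F : Type} [Field F] [DecidableEq F] {n : ℕ} (g : Matrix (Fin n) (Fin n) F) :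
    Decidable (IsUU g) :=
  haveI : ∀ i : Fin n, Decidable (∀ j : Fin n, j < i → g i j = 0) := fun _ => inferInstance
  decidable_of_iff ((∀ i j : Fin n, j < i → g i j = 0) ∧ (∀ i : Fin n, g i i = 1)) Iff.rfl

/-- The set `B_μ = {μ₁, μ₁+μ₂, …, μ₁+⋯+μ_ℓ}` of partial sums of the composition `μ`. -/
def Bset (μ : List ℕ) : Finset ℕ :=
  (Finset.range μ.length).image fun k => (μ.take (k + 1)).sum

/-- The linear character `ψ_μ` of `U`, as a function on all of `GL n F`:
`ψ_μ(u) = ψ(Σ u_{i,i+1})`, where the sum runs over the superdiagonal positions whose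
(1-based) row index `i` satisfies `i ∉ B_μ`. -/
noncomputable def psiMu {F : Type} [Field F] [Fintype F] [DecidableEq F]
    (ψ : AddChar F ℂ) (n : ℕ) (μ : List ℕ) (g : GL (Fin n) F) : ℂ :=
  ψ (∑ p : Fin n × Fin n,
      if (p.1 : ℕ) + 1 = (p.2 : ℕ) ∧ (p.1 : ℕ) + 1 ∉ Bset μ
      then (g : Matrix (Fin n) (Fin n) F) p.1 p.2 else 0)

/-- The subgroup `U` of unipotent upper triangular matrices, as a finset of `GL n F`. -/
noncomputable def Uset (F : Type) [Field F] [Fintype F] [DecidableEq F] (n : ℕ) :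
    Finset (GL (Fin n) F) :=
  Finset.univ.filter fun g => IsUU (g : Matrix (Fin n) (Fin n) F)

/-- The idempotent `e_μ = (1/|U|) Σ_{u ∈ U} ψ_μ(u⁻¹) u` of the group algebra `ℂ[GL n F]`. -/
noncomputable def eMu {F : Type} [Field F] [Fintype F] [DecidableEq F]
    (ψ : AddChar F ℂ) (n : ℕ) (μ : List ℕ) : MonoidAlgebra ℂ (GL (Fin n) F) :=
  ((Uset F n).card : ℂ)⁻¹ • ∑ u ∈ Uset F n, MonoidAlgebra.single u (psiMu ψ n μ u⁻¹)

/-- A matrix is monomial when it has exactly one nonzero entry in each row and column. -/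
def IsMonomialMat {F : Type} [Field F] {n : ℕ} (g : Matrix (Fin n) (Fin n) F) : Prop :=
  (∀ i : Fin n, ∃! j : Fin n, g i j ≠ 0) ∧ (∀ j : Fin n, ∃! i : Fin n, g i j ≠ 0)

/-- The set `N_μ` of monomial matrices `v` such that whenever `u, vuv⁻¹ ∈ U` one has
`ψ_μ(u) = ψ_μ(vuv⁻¹)`. -/
noncomputable def Nmu {F : Type} [Field F] [Fintype F] [DecidableEq F]
    (ψ : AddChar F ℂ) (n : ℕ) (μ : List ℕ) : Set (GL (Fin n) F) :=
  {v | IsMonomialMat (v : Matrix (Fin n) (Fin n) F) ∧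
    ∀ u : GL (Fin n) F, IsUU (u : Matrix (Fin n) (Fin n) F) →
      IsUU ((v * u * v⁻¹ : GL (Fin n) F) : Matrix (Fin n) (Fin n) F) →
      psiMu ψ n μ u = psiMu ψ n μ (v * u * v⁻¹)}

/-- The set `M_μ` of `ℓ×ℓ` matrices of monic polynomials with nonzero constant term whose
degree row sums and degree column sums are both equal to `μ`. -/
def Mmu (F : Type) [Field F] (μ : List ℕ) :
    Set (Matrix (Fin μ.length) (Fin μ.length) (Polynomial F)) :=
  {a | (∀ i j, (a i j).Monic ∧ Polynomial.eval 0 (a i j) ≠ 0) ∧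
       (∀ i, (∑ j, (a i j).natDegree) = μ.get i) ∧
       (∀ j, (∑ i, (a i j).natDegree) = μ.get j)}

/-- The unipotent Hecke algebra `H_μ = e_μ ℂ[G] e_μ` as a subspace of the group algebra. -/
noncomputable def Hsub {F : Type} [Field F] [Fintype F] [DecidableEq F] {n : ℕ}
    (e : MonoidAlgebra ℂ (GL (Fin n) F)) : Submodule ℂ (MonoidAlgebra ℂ (GL (Fin n) F)) :=
  LinearMap.range ((LinearMap.mulLeft ℂ e).comp (LinearMap.mulRight ℂ e))

/-- The idempotent `e_U = (1/|U|) Σ_{u ∈ U} u` of `ℂ[GL n F]`. -/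
noncomputable def eU (F : Type) [Field F] [Fintype F] [DecidableEq F] (n : ℕ) :
    MonoidAlgebra ℂ (GL (Fin n) F) :=
  ((Uset F n).card : ℂ)⁻¹ • ∑ u ∈ Uset F n, MonoidAlgebra.single u (1 : ℂ)

/-- The antidiagonal permutation matrix `w_{(n)}`, `(w_{(n)})_{ij} = δ_{j, n+1-i}`. -/
def antidiagMat (F : Type) [Field F] (n : ℕ) : Matrix (Fin n) (Fin n) F :=
  Matrix.of fun i j => if (i : ℕ) + (j : ℕ) + 1 = n then 1 else 0



section Aux

variable {F : Type} [Field F] {n : ℕ}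

lemma isUU_one : IsUU (1 : Matrix (Fin n) (Fin n) F) :=
  ⟨fun i j h => Matrix.one_apply_ne (ne_of_gt h), fun i => Matrix.one_apply_eq i⟩

lemma isUU_mul {A B : Matrix (Fin n) (Fin n) F} (hA : IsUU A) (hB : IsUU B) :
    IsUU (A * B) := by
  constructor
  · intro i j hji
    rw [Matrix.mul_apply]
    apply Finset.sum_eq_zero
    intro k _
    rcases lt_or_ge k i with hk | hk
    · rw [hA.1 i k hk, zero_mul]
    · rw [hB.1 k j (lt_of_lt_of_le hji hk), mul_zero]
  · intro i
    rw [Matrix.mul_apply, Finset.sum_eq_single i]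
    · rw [hA.2, hB.2, one_mul]
    · intro k _ hk
      rcases lt_or_gt_of_ne hk with h | h
      · rw [hA.1 i k h, zero_mul]
      · rw [hB.1 k i h, mul_zero]
    · intro h; exact absurd (Finset.mem_univ i) h

lemma mul_superdiag {A B : Matrix (Fin n) (Fin n) F} (hA : IsUU A) (hB : IsUU B)
    {i j : Fin n} (hij : (i : ℕ) + 1 = (j : ℕ)) : (A * B) i j = A i j + B i j := by
  have hij' : i < j := by rw [Fin.lt_iff_val_lt_val]; omega
  rw [Matrix.mul_apply]
  have key : ∀ k : Fin n, A i k * B k j =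
      (if k = i then B i j else 0) + (if k = j then A i j else 0) := by
    intro k
    rcases lt_trichotomy k i with h | h | h
    · rw [hA.1 i k h, zero_mul, if_neg (ne_of_lt h), if_neg (ne_of_lt (h.trans hij')),
        add_zero]
    · subst h
      rw [hA.2, one_mul, if_pos rfl, if_neg (ne_of_lt hij'), add_zero]
    · have hjk : j ≤ k := by rw [Fin.le_iff_val_le_val]; rw [Fin.lt_iff_val_lt_val] at h; omega
      rcases eq_or_lt_of_le hjk with h2 | h2
      · subst h2
        rw [hB.2, mul_one, if_neg (ne_of_gt h), if_pos rfl, zero_add]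
      · rw [hB.1 k j h2, mul_zero, if_neg (ne_of_gt h), if_neg (ne_of_gt h2), add_zero]
  rw [Finset.sum_congr rfl fun k _ => key k, Finset.sum_add_distrib,
    Finset.sum_ite_eq' Finset.univ i fun _ => B i j,
    Finset.sum_ite_eq' Finset.univ j fun _ => A i j,
    if_pos (Finset.mem_univ i), if_pos (Finset.mem_univ j), add_comm]

end Aux

section Aux2
variable {F : Type} [Field F] [Fintype F] [DecidableEq F] {n : ℕ}

def sdSum (g : Matrix (Fin n) (Fin n) F) : F :=
  ∑ p : Fin n × Fin n, if (p.1 : ℕ) + 1 = (p.2 : ℕ) then g p.1 p.2 else 0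

lemma psiMu_nn (ψ : AddChar F ℂ) (g : GL (Fin n) F) :
    psiMu ψ n [n] g = ψ (sdSum (g : Matrix (Fin n) (Fin n) F)) := by
  unfold psiMu sdSum
  congr 1
  apply Finset.sum_congr rfl
  intro p _
  have hB : ∀ x : ℕ, x ∈ Bset [n] ↔ x = n := by
    intro x; simp [Bset]
  by_cases h : (p.1 : ℕ) + 1 = (p.2 : ℕ)
  · rw [if_pos h, if_pos]
    refine ⟨h, ?_⟩
    rw [hB]
    have := p.2.isLt
    omega
  · rw [if_neg h, if_neg (fun hc => h hc.1)]

lemma sdSum_mul {A B : Matrix (Fin n) (Fin n) F} (hA : IsUU A) (hB : IsUU B)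
    (hadd : ∀ i j : Fin n, (i : ℕ) + 1 = (j : ℕ) → (A * B) i j = A i j + B i j) :
    sdSum (A * B) = sdSum A + sdSum B := by
  unfold sdSum
  rw [← Finset.sum_add_distrib]
  apply Finset.sum_congr rfl
  intro p _
  by_cases h : (p.1 : ℕ) + 1 = (p.2 : ℕ)
  · rw [if_pos h, if_pos h, if_pos h, hadd _ _ h]
  · rw [if_neg h, if_neg h, if_neg h, add_zero]

lemma isUU_inv (g : GL (Fin n) F) (hg : IsUU (g : Matrix (Fin n) (Fin n) F)) :
    IsUU ((g⁻¹ : GL (Fin n) F) : Matrix (Fin n) (Fin n) F) := by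
  haveI : Invertible (g : Matrix (Fin n) (Fin n) F) := g.invertible
  have hA : ((g⁻¹ : GL (Fin n) F) : Matrix (Fin n) (Fin n) F)
      = (g : Matrix (Fin n) (Fin n) F)⁻¹ := Matrix.coe_units_inv g
  have ht : Matrix.BlockTriangular (g : Matrix (Fin n) (Fin n) F) id :=
    fun i j h => hg.1 i j h
  have ht' := Matrix.blockTriangular_inv_of_blockTriangular ht
  constructor
  · intro i j hji
    rw [hA]
    exact ht' hji
  · intro i
    have h1 : ((g⁻¹ : GL (Fin n) F) * g : GL (Fin n) F) = 1 := inv_mul_cancel g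
    have h2 : (((g⁻¹ : GL (Fin n) F) : Matrix (Fin n) (Fin n) F)
        * (g : Matrix (Fin n) (Fin n) F)) i i = 1 := by
      rw [← Units.val_mul, h1, Units.val_one, Matrix.one_apply_eq]
    rw [Matrix.mul_apply, Finset.sum_eq_single i] at h2
    · rwa [hg.2, mul_one] at h2
    · intro k _ hk
      rcases lt_or_gt_of_ne hk with h | h
      · rw [hA, ht' (show (id k : Fin n) < id i from h), zero_mul]
      · rw [hg.1 k i h, mul_zero]
    · intro h; exact absurd (Finset.mem_univ i) h

end Aux2

section PermLemma

lemma perm_eq_rev {n : ℕ} (τ : Equiv.Perm (Fin n))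
    (h : ∀ (a : ℕ) (ha : a + 1 < n), τ ⟨a + 1, ha⟩ < τ ⟨a, by omega⟩) :
    ∀ j, τ j = Fin.rev j := by
  have hanti : ∀ (d : ℕ) (a b : Fin n), (b : ℕ) = (a : ℕ) + d + 1 → τ b < τ a := by
    intro d
    induction d with
    | zero =>
      intro a b hb
      have h1 : (a : ℕ) + 1 < n := by have := b.isLt; omega
      have hb' : b = ⟨(a : ℕ) + 1, h1⟩ := Fin.ext (by simpa using hb)
      rw [hb']
      simpa using h a h1
    | succ d ih =>
      intro a b hb
      have h1 : (a : ℕ) + 1 < n := by have := b.isLt; omega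
      refine (ih ⟨(a : ℕ) + 1, h1⟩ b (by simp; omega)).trans ?_
      simpa using h a h1
  have hmono : StrictMono (fun i : Fin n => τ (Fin.rev i)) := by
    intro a b hab
    have hr : Fin.rev b < Fin.rev a := Fin.rev_lt_rev.mpr hab
    exact hanti ((Fin.rev a : ℕ) - (Fin.rev b : ℕ) - 1) (Fin.rev b) (Fin.rev a)
      (by omega)
  have hbij : Function.Bijective (fun i : Fin n => τ (Fin.rev i)) :=
    τ.bijective.comp Fin.rev_involutive.bijective
  haveI : WellFoundedLT (Fin n) := Finite.to_wellFoundedLT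
  have hid : (fun i : Fin n => τ (Fin.rev i)) = id :=
    (hmono.range_inj strictMono_id).mp
      (by rw [hbij.surjective.range_eq, Set.range_id])
  intro j
  have := congrFun hid (Fin.rev j)
  simpa [Fin.rev_rev] using this

end PermLemma

section Aux4
variable {F : Type} [Field F] [Fintype F] [DecidableEq F] {n : ℕ}

lemma mem_Uset {g : GL (Fin n) F} :
    g ∈ Uset F n ↔ IsUU (g : Matrix (Fin n) (Fin n) F) := by
  simp [Uset]

lemma Uset_mul {g h : GL (Fin n) F} (hg : g ∈ Uset F n) (hh : h ∈ Uset F n) :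
    g * h ∈ Uset F n := by
  rw [mem_Uset] at *
  rw [Units.val_mul]
  exact isUU_mul hg hh

lemma Uset_inv {g : GL (Fin n) F} (hg : g ∈ Uset F n) : g⁻¹ ∈ Uset F n :=
  mem_Uset.mpr (isUU_inv g (mem_Uset.mp hg))

lemma psiMu_mul (ψ : AddChar F ℂ) {u v : GL (Fin n) F}
    (hu : u ∈ Uset F n) (hv : v ∈ Uset F n) :
    psiMu ψ n [n] (u * v) = psiMu ψ n [n] u * psiMu ψ n [n] v := by
  rw [psiMu_nn, psiMu_nn, psiMu_nn, ← AddChar.map_add_eq_mul]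
  congr 1
  rw [Units.val_mul]
  exact sdSum_mul (mem_Uset.mp hu) (mem_Uset.mp hv)
    (fun i j h => mul_superdiag (mem_Uset.mp hu) (mem_Uset.mp hv) h)

lemma single_mul_eU {x : GL (Fin n) F} (hx : x ∈ Uset F n) :
    MonoidAlgebra.single x (1 : ℂ) * eU F n = eU F n := by
  unfold eU
  rw [mul_smul_comm, Finset.mul_sum]
  congr 1
  have hs : ∀ u ∈ Uset F n, MonoidAlgebra.single x (1 : ℂ) * MonoidAlgebra.single u (1 : ℂ)
      = MonoidAlgebra.single (x * u) (1 : ℂ) := fun u _ => by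
    rw [MonoidAlgebra.single_mul_single, one_mul]
  rw [Finset.sum_congr rfl hs]
  refine Finset.sum_equiv (Equiv.mulLeft x) (fun u => ?_) (fun u _ => rfl)
  constructor
  · intro hu
    exact Uset_mul hx hu
  · intro hu
    have := Uset_mul (Uset_inv hx) hu
    simpa [Equiv.mulLeft, inv_mul_cancel_left] using this

lemma eMu_mul_single (ψ : AddChar F ℂ) {u : GL (Fin n) F} (hu : u ∈ Uset F n) :
    eMu ψ n [n] * MonoidAlgebra.single u 1 = psiMu ψ n [n] u • eMu ψ n [n] := by
  unfold eMu
  simp only [smul_mul_assoc, Finset.sum_mul, Finset.smul_sum]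
  refine Finset.sum_equiv (Equiv.mulRight u) (fun x => ?_) (fun x hx => ?_)
  · constructor
    · intro hxx
      exact Uset_mul hxx hu
    · intro hxx
      have := Uset_mul hxx (Uset_inv hu)
      simpa [Equiv.mulRight, mul_inv_cancel_right] using this
  · show (((Uset F n).card : ℂ)⁻¹) • (MonoidAlgebra.single x (psiMu ψ n [n] x⁻¹) *
        MonoidAlgebra.single u 1)
      = psiMu ψ n [n] u • (((Uset F n).card : ℂ)⁻¹) •
        MonoidAlgebra.single (x * u) (psiMu ψ n [n] (x * u)⁻¹)
    rw [MonoidAlgebra.single_mul_single, mul_one, MonoidAlgebra.smul_single',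
      MonoidAlgebra.smul_single', MonoidAlgebra.smul_single']
    congr 1
    have he : u * (x * u)⁻¹ = x⁻¹ := by group
    have hps : psiMu ψ n [n] x⁻¹ = psiMu ψ n [n] u * psiMu ψ n [n] (x * u)⁻¹ := by
      calc psiMu ψ n [n] x⁻¹ = psiMu ψ n [n] (u * (x * u)⁻¹) := by rw [he]
        _ = psiMu ψ n [n] u * psiMu ψ n [n] (x * u)⁻¹ :=
            psiMu_mul ψ hu (Uset_inv (Uset_mul hx hu))
    rw [hps]
    ring

lemma isUU_one_add_std {i j : Fin n} (hij : i < j) (t : F) :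
    IsUU (1 + Matrix.single i j t) := by
  constructor
  · intro p q hqp
    rw [Matrix.add_apply, Matrix.one_apply_ne (ne_of_gt hqp),
      Matrix.single_apply_of_ne, add_zero]
    rintro ⟨rfl, rfl⟩
    exact absurd hij (not_lt.mpr hqp.le)
  · intro p
    rw [Matrix.add_apply, Matrix.one_apply_eq,
      Matrix.single_apply_of_ne, add_zero]
    rintro ⟨rfl, rfl⟩
    exact lt_irrefl _ hij

lemma sdSum_one_add_std {i j : Fin n} (hij : (i : ℕ) + 1 = (j : ℕ)) (t : F) :
    sdSum (1 + Matrix.single i j t) = t := by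
  unfold sdSum
  rw [Finset.sum_eq_single (i, j)]
  · show (if (i : ℕ) + 1 = (j : ℕ) then (1 + Matrix.single i j t) i j else 0) = t
    rw [if_pos hij, Matrix.add_apply,
      Matrix.one_apply_ne (by rw [Fin.ne_iff_vne]; omega),
      Matrix.single_apply_same, zero_add]
  · intro p _ hp
    by_cases hc : (p.1 : ℕ) + 1 = (p.2 : ℕ)
    · rw [if_pos hc, Matrix.add_apply,
        Matrix.one_apply_ne (by rw [Fin.ne_iff_vne]; omega),
        Matrix.single_apply_of_ne, add_zero]
      rintro ⟨rfl, rfl⟩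
      exact hp rfl
    · rw [if_neg hc]
  · intro hni
    exact absurd (Finset.mem_univ _) hni

end Aux4

/-- If `w` is a permutation matrix with `w ≠ w_{(n)}`, then
`e_{(n)} · w · e_U = 0` in `ℂ[G]`. -/
theorem eGG_perm_eU_eq_zero {F : Type} [Field F] [Fintype F] [DecidableEq F]
    (n : ℕ) (hn : 1 ≤ n) (ψ : AddChar F ℂ) (hψ : ψ ≠ 1)
    (w : GL (Fin n) F) (σ : Equiv.Perm (Fin n))
    (hw : ∀ i j : Fin n, (w : Matrix (Fin n) (Fin n) F) i j = if i = σ j then 1 else 0)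
    (hne : (w : Matrix (Fin n) (Fin n) F) ≠ antidiagMat F n) :
    eMu ψ n [n] * MonoidAlgebra.single w 1 * eU F n = 0 := by
  -- find t₀ with ψ t₀ ≠ 1
  obtain ⟨t₀, ht₀⟩ : ∃ t : F, ψ t ≠ 1 := by
    by_contra hc
    push_neg at hc
    exact hψ (DFunLike.ext ψ 1 fun x => (hc x).trans (AddChar.one_apply x).symm)
  set τ : Equiv.Perm (Fin n) := σ⁻¹ with hτ
  -- find an ascent of τ
  have key : ∃ (a : ℕ) (ha : a + 1 < n), τ ⟨a, by omega⟩ < τ ⟨a + 1, ha⟩ := by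
    by_contra hc
    push_neg at hc
    have hadj : ∀ (a : ℕ) (ha : a + 1 < n), τ ⟨a + 1, ha⟩ < τ ⟨a, by omega⟩ := by
      intro a ha
      have h1 := hc a ha
      have hne : τ ⟨a + 1, ha⟩ ≠ τ ⟨a, by omega⟩ := by
        intro he
        have := τ.injective he
        simp [Fin.ext_iff] at this
      exact lt_of_le_of_ne h1 hne
    have hrev := perm_eq_rev τ hadj
    have hσ : ∀ j, σ j = Fin.rev j := by
      intro j
      have h1 : τ (σ j) = Fin.rev (σ j) := hrev (σ j)
      have h2 : τ (σ j) = j := by simp [hτ]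
      rw [h2] at h1
      have h3 := congrArg Fin.rev h1
      rw [Fin.rev_rev] at h3
      exact h3.symm
    apply hne
    ext i j
    rw [hw i j]
    have hiff : (i = σ j) ↔ ((i : ℕ) + (j : ℕ) + 1 = n) := by
      rw [hσ j, Fin.ext_iff, Fin.val_rev]
      have := j.isLt
      omega
    show (if i = σ j then (1 : F) else 0) = antidiagMat F n i j
    rw [antidiagMat]
    simp only [Matrix.of_apply]
    exact if_congr hiff rfl rfl
  obtain ⟨a, ha, hlt⟩ := key
  set i0 : Fin n := ⟨a, by omega⟩ with hi0
  set j0 : Fin n := ⟨a + 1, ha⟩ with hj0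
  have hij0 : i0 < j0 := by rw [Fin.lt_iff_val_lt_val]; simp [hi0, hj0]
  have hij0' : (i0 : ℕ) + 1 = (j0 : ℕ) := rfl
  set E : Matrix (Fin n) (Fin n) F := Matrix.single i0 j0 t₀ with hE
  set E' : Matrix (Fin n) (Fin n) F := Matrix.single (τ i0) (τ j0) t₀ with hE'
  have hEE : E * E = 0 := Matrix.single_mul_single_of_ne t₀ i0 j0 i0 (ne_of_gt hij0) t₀
  have hEE' : E' * E' = 0 := Matrix.single_mul_single_of_ne t₀ (τ i0) (τ j0) (τ i0) (ne_of_gt hlt) t₀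
  have hprod : ∀ (A : Matrix (Fin n) (Fin n) F), A * A = 0 → (1 + A) * (1 - A) = 1 := by
    intro A hA
    rw [mul_sub, mul_one, add_mul, one_mul, hA, add_zero, add_sub_cancel_right]
  have hprod' : ∀ (A : Matrix (Fin n) (Fin n) F), A * A = 0 → (1 - A) * (1 + A) = 1 := by
    intro A hA
    rw [mul_add, mul_one, sub_mul, one_mul, hA, sub_zero, sub_add_cancel]
  set uG : GL (Fin n) F := ⟨1 + E, 1 - E, hprod E hEE, hprod' E hEE⟩ with huG
  set vG : GL (Fin n) F := ⟨1 + E', 1 - E', hprod E' hEE', hprod' E' hEE'⟩ with hvG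
  have huU : uG ∈ Uset F n := mem_Uset.mpr (isUU_one_add_std hij0 t₀)
  have hvU : vG ∈ Uset F n := mem_Uset.mpr (isUU_one_add_std hlt t₀)
  -- commutation:  uG * w = w * vG
  have hcommM : E * (w : Matrix (Fin n) (Fin n) F)
      = (w : Matrix (Fin n) (Fin n) F) * E' := by
    ext p q
    rw [hE, hE']
    by_cases hp : p = i0
    · subst hp
      rw [Matrix.single_mul_apply_same]
      by_cases hq : q = τ j0
      · subst hq
        rw [Matrix.mul_single_apply_same, hw, hw,
          (show ∀ x, σ (σ⁻¹ x) = x from σ.apply_symm_apply), (show ∀ x, σ (σ⁻¹ x) = x from σ.apply_symm_apply),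
          if_pos rfl, if_pos rfl, mul_one, one_mul]
      · rw [Matrix.mul_single_apply_of_ne _ _ _ _ _ hq, hw]
        rw [if_neg, mul_zero]
        intro hj
        exact hq (by rw [hj, hτ]; simp)
    · rw [Matrix.single_mul_apply_of_ne _ _ _ _ _ hp]
      by_cases hq : q = τ j0
      · subst hq
        rw [Matrix.mul_single_apply_same, hw,
          (show ∀ x, σ (σ⁻¹ x) = x from σ.apply_symm_apply), if_neg hp, zero_mul]
      · rw [Matrix.mul_single_apply_of_ne _ _ _ _ _ hq]
  have hcomm : uG * w = w * vG := by
    apply Units.ext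
    rw [Units.val_mul, Units.val_mul]
    show (1 + E) * (w : Matrix (Fin n) (Fin n) F)
        = (w : Matrix (Fin n) (Fin n) F) * (1 + E')
    rw [add_mul, mul_add, one_mul, mul_one, hcommM]
  -- psiMu value of uG
  have hpsi : psiMu ψ n [n] uG = ψ t₀ := by
    rw [psiMu_nn]
    show ψ (sdSum (1 + E)) = ψ t₀
    rw [hE, sdSum_one_add_std hij0' t₀]
  -- the two absorption identities
  have h1 : eMu ψ n [n] * MonoidAlgebra.single uG 1 = (ψ t₀ : ℂ) • eMu ψ n [n] := by
    rw [eMu_mul_single ψ huU, hpsi]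
  have h2 : MonoidAlgebra.single vG (1 : ℂ) * eU F n = eU F n := single_mul_eU hvU
  set X : MonoidAlgebra ℂ (GL (Fin n) F) :=
    eMu ψ n [n] * MonoidAlgebra.single w 1 * eU F n with hX
  have hfix : (ψ t₀ : ℂ) • X = X := by
    calc (ψ t₀ : ℂ) • X
        = ((ψ t₀ : ℂ) • eMu ψ n [n]) * MonoidAlgebra.single w 1 * eU F n := by
          rw [hX, smul_mul_assoc, smul_mul_assoc]
      _ = eMu ψ n [n] * MonoidAlgebra.single uG 1 * MonoidAlgebra.single w 1 * eU F n := by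
          rw [h1]
      _ = eMu ψ n [n] * MonoidAlgebra.single (uG * w) (1 : ℂ) * eU F n := by
          rw [mul_assoc (eMu ψ n [n]), MonoidAlgebra.single_mul_single, one_mul]
      _ = eMu ψ n [n] * MonoidAlgebra.single (w * vG) (1 : ℂ) * eU F n := by rw [hcomm]
      _ = eMu ψ n [n] * (MonoidAlgebra.single w (1 : ℂ) *
            MonoidAlgebra.single vG (1 : ℂ)) * eU F n := by
          rw [MonoidAlgebra.single_mul_single, one_mul]
      _ = eMu ψ n [n] * MonoidAlgebra.single w 1 *
            (MonoidAlgebra.single vG (1 : ℂ) * eU F n) := by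
          rw [← mul_assoc, mul_assoc]
      _ = X := by rw [h2, hX]
  have hzero : ((ψ t₀ : ℂ) - 1) • X = 0 := by
    rw [sub_smul, one_smul, hfix, sub_self]
  rcases smul_eq_zero.mp hzero with h | h
  · exact absurd (by rwa [sub_eq_zero] at h) ht₀
  · exact h
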